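/- For every real x and all integers k, l ≥ 0: ∑_{n=0}^{k} B_{l+n+1, k−n} = ∑_{n=0}^{l} B_{k+n+1, l−n}. (Equivalently, the coefficients V^{+−}_{kl} = i·(−1)^l·∑_{n=0}^{k} B_{l+n+1,k−n} and V^{−+}_{kl} = i·(−1)^k·∑_{n=0}^{k} B_{l+n+1,k−n} satisfy the relations V^{+−}_{kl} = V^{−+}_{lk} and V^{+−}_{kl} = (−1)^{k−l}·V^{+−}_{lk}.) -/

import Mathlib

/-!
Both sides are pieces of the anti-diagonal sum `∑_{p+q=k+l+1} B_{p,q}`: the left side is the part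
with `p > l`, and by `B_{p,q} = -B_{q,p}` the right side is minus the part with `p ≤ l`. The whole
anti-diagonal sum vanishes, since swapping `p` and `q` maps it to its negative.
-/

/-- `α₀ = 1` and, for `n ≥ 1`, `αₙ = ((-1)ⁿ/(8ⁿ·n!))·∏_{ℓ=1}^{n}(2ℓ-1)²`. -/
noncomputable def alph (n : ℕ) : ℝ :=
  ((-1) ^ n / (8 ^ n * Nat.factorial n)) * ∏ ℓ ∈ Finset.range n, ((2 * (ℓ : ℝ) + 1)) ^ 2

/-- `B_{p,q} = ((2(p−q))/((2p−1)(2q−1)))·α_p·α_q·x^{p+q}` for `p, q ≥ 0`. -/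
noncomputable def Bcoef (x : ℝ) (p q : ℕ) : ℝ :=
  ((2 * ((p : ℝ) - (q : ℝ))) / ((2 * (p : ℝ) - 1) * (2 * (q : ℝ) - 1))) *
    alph p * alph q * x ^ (p + q)

namespace Finset

variable {M : Type*} [AddCommGroup M] [IsAddTorsionFree M] {f : ℕ → ℕ → M}

theorem sum_range_succ_sub_eq_zero_of_antisymm (hf : ∀ p q, f p q = -f q p) (n : ℕ) :
    ∑ p ∈ range (n + 1), f p (n - p) = 0 := by
  rw [← Nat.sum_antidiagonal_eq_sum_range_succ f n]
  refine self_eq_neg.mp ?_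
  rw [← sum_neg_distrib, ← Nat.sum_antidiagonal_swap]
  exact sum_congr rfl fun p _ => hf p.2 p.1

theorem sum_range_add_succ_sub_eq_of_antisymm (hf : ∀ p q, f p q = -f q p) (k l : ℕ) :
    ∑ n ∈ range (k + 1), f (l + n + 1) (k - n) =
      ∑ n ∈ range (l + 1), f (k + n + 1) (l - n) := by
  have hlow : ∑ p ∈ range (l + 1), f p (k + l + 1 - p) =
      -∑ n ∈ range (l + 1), f (k + n + 1) (l - n) := by
    rw [← sum_range_reflect, ← sum_neg_distrib]
    refine sum_congr rfl fun n hn => ?_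
    rw [mem_range] at hn
    rw [hf, show l + 1 - 1 - n = l - n by omega, show k + l + 1 - (l - n) = k + n + 1 by omega]
  have hhigh : ∑ n ∈ range (k + 1), f (l + 1 + n) (k + l + 1 - (l + 1 + n)) =
      ∑ n ∈ range (k + 1), f (l + n + 1) (k - n) :=
    sum_congr rfl fun n _ => by rw [show l + 1 + n = l + n + 1 by omega,
      show k + l + 1 - (l + n + 1) = k - n by omega]
  have hsplit := sum_range_succ_sub_eq_zero_of_antisymm hf (k + l + 1)
  rw [show k + l + 1 + 1 = (l + 1) + (k + 1) by omega, sum_range_add, hlow, hhigh] at hsplit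
  exact (neg_add_eq_zero.mp hsplit).symm

end Finset

theorem Bcoef_antisymm (x : ℝ) (p q : ℕ) : Bcoef x p q = -Bcoef x q p := by
  unfold Bcoef
  rw [Nat.add_comm q p]
  ring

/-- For every real `x` and all `k, l ≥ 0`:
`∑_{n=0}^{k} B_{l+n+1,k−n} = ∑_{n=0}^{l} B_{k+n+1,l−n}` (equivalently,
`V^{+−}_{kl} = V^{−+}_{lk}` and `V^{+−}_{kl} = (−1)^{k−l}·V^{+−}_{lk}`). -/
theorem stmt15 (x : ℝ) (k l : ℕ) :
    ∑ n ∈ Finset.range (k + 1), Bcoef x (l + n + 1) (k - n) =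
      ∑ n ∈ Finset.range (l + 1), Bcoef x (k + n + 1) (l - n) :=
  Finset.sum_range_add_succ_sub_eq_of_antisymm (Bcoef_antisymm x) k l
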